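/- Define the Green function H_x(k) for the Markov chain X by H_x(k) = 3(2k+3)/10 if x ≤ k, and H_x(k) = 3 h(k)(2k+3)/(10 h(x)) if x > k, where h(x) = x(x+1)(x+2)(x+3)(2x+3). Then for every x ≥ 2 and k ≥ 2 with x ≠ k, H satisfies the harmonicity relation H_x(k) = p(x,x+1) H_{x+1}(k) + p(x,x) H_x(k) + p(x,x-1) H_{x-1}(k) + [x = k], where p are the transitions p(x,x+1) = (x+4)(2x+5)/(3(x+2)(2x+3)), p(x,x) = x(x+3)/(3(x+1)(x+2)), p(x,x-1) = (x-1)(2x+1)/(3(x+1)(2x+3)). -/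

import Mathlib

def h (x : ℚ) : ℚ := x * (x + 1) * (x + 2) * (x + 3) * (2 * x + 3)
def pUp (x : ℚ) : ℚ := (x + 4) * (2 * x + 5) / (3 * (x + 2) * (2 * x + 3))
def pStay (x : ℚ) : ℚ := x * (x + 3) / (3 * (x + 1) * (x + 2))
def pDown (x : ℚ) : ℚ := (x - 1) * (2 * x + 1) / (3 * (x + 1) * (2 * x + 3))

/-- Green function of the chain X. -/
def H (x k : ℕ) : ℚ :=
  if x ≤ k then 3 * (2 * (k : ℚ) + 3) / 10
  else 3 * h k * (2 * (k : ℚ) + 3) / (10 * h x)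

/-!
For `x < k` the function `H · k` is constant near `x`, and constants are harmonic because the
transition probabilities sum to one. For `x > k` it is a multiple of `1 / h` at `x - 1`, `x`,
`x + 1` (the two formulas for `H` agree at `x = k`), and `1 / h` is harmonic for the chain.
-/

theorem h_pos {x : ℚ} (hx : 0 < x) : 0 < h x := by
  unfold h
  positivity

theorem pUp_add_pStay_add_pDown {x : ℚ} (hx : 0 ≤ x) : pUp x + pStay x + pDown x = 1 := by
  unfold pUp pStay pDown
  field_simp
  ring

theorem inv_h_harmonic {x : ℚ} (hx : 1 < x) :
    pUp x / h (x + 1) + pStay x / h x + pDown x / h (x - 1) = 1 / h x := by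
  have hx1 : 0 < x - 1 := sub_pos.mpr hx
  have hx0 : 0 < x := by linarith
  have h2x1 : 0 < 2 * x + 1 := by linarith
  unfold pUp pStay pDown h
  field_simp
  ring

theorem H_of_le {x k : ℕ} (hxk : x ≤ k) : H x k = 3 * (2 * (k : ℚ) + 3) / 10 := by
  simp [H, hxk]

theorem H_of_ge {x k : ℕ} (hk : 0 < k) (hkx : k ≤ x) :
    H x k = 3 * h k * (2 * (k : ℚ) + 3) / 10 / h x := by
  rcases hkx.lt_or_eq with hlt | rfl
  · simp [H, hlt.not_ge, div_div]
  · have hhk : h k ≠ 0 := (h_pos (by exact_mod_cast hk)).ne'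
    rw [H_of_le le_rfl]
    field_simp

theorem green_harmonic_general (x k : ℕ) (hk : 2 ≤ k) (hxk : x ≠ k) :
    H x k = pUp x * H (x + 1) k + pStay x * H x k + pDown x * H (x - 1) k
      + (if x = k then 1 else 0) := by
  rw [if_neg hxk, add_zero]
  rcases hxk.lt_or_gt with hlt | hgt
  · rw [H_of_le hlt.le, H_of_le hlt, H_of_le (by omega)]
    linear_combination (-3 * (2 * (k : ℚ) + 3) / 10) *
      pUp_add_pStay_add_pDown (x := x) (Nat.cast_nonneg x)
  · have hk0 : 0 < k := by omega
    have hx1 : (1 : ℚ) < x := by exact_mod_cast (by omega : 1 < x)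
    rw [H_of_ge hk0 hgt.le, H_of_ge hk0 (by omega), H_of_ge hk0 (by omega),
      Nat.cast_pred (by omega), Nat.cast_succ]
    linear_combination (-3 * h k * (2 * (k : ℚ) + 3) / 10) * inv_h_harmonic hx1

theorem green_harmonic (x k : ℕ) (hx : 2 ≤ x) (hk : 2 ≤ k) (hxk : x ≠ k) :
    H x k = pUp x * H (x + 1) k + pStay x * H x k + pDown x * H (x - 1) k
      + (if x = k then 1 else 0) :=
  green_harmonic_general x k hk hxk
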